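/- arXiv:2112.00615 — 9 statements merged into one kernel-verified Lean document; each statement's English description precedes it below -/
import Mathlib

section
/- The set A = ⋃_{n≥1} {k ∈ ℕ : 2·10^(n-1)+2 ≤ k ≤ 10^n} ∪ {0,1,...,10} is an additive basis of order at most 3, i.e., every natural number can be written as a sum of three elements of A. -/
/-- The set `A = {0,...,10} ∪ ⋃_{n≥2} {2·10^(n-1)+2, ..., 10^n}`. -/
def A : Set ℕ := Set.Iic 10 ∪ ⋃ n ∈ Set.Ici 2, Set.Icc (2 * 10 ^ (n - 1) + 2) (10 ^ n)

/-!
Let `10^n ≤ N < 10^(n+1)` with `n ≥ 1`; every block `[2·10^(n-1)+2, 10^n]` with `n ≥ 1` lies in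
`A` (for `n = 1` it is inside `{0,...,10}`). If `N ≤ 10^n + 10` then `N = 10^n + (N - 10^n)`, and
if `N ≥ 2·10^n + 2` then `N` lies in block `n + 1`. In the remaining gap, `N` minus a correction
`c ∈ {0,1}` lies in `[10^n + 10, 2·10^n]`, which is twice the range of block `n`, so it splits
as a sum of two elements of that block.
-/

lemma mem_A_of_le_ten {x : ℕ} (h : x ≤ 10) : x ∈ A := Or.inl h

lemma mem_A_of_mem_Icc {n x : ℕ} (hn : 1 ≤ n) (hx : x ∈ Set.Icc (2 * 10 ^ (n - 1) + 2) (10 ^ n)) :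
    x ∈ A := by
  obtain rfl | hn := hn.eq_or_lt
  · exact mem_A_of_le_ten hx.2
  · exact Or.inr (Set.mem_biUnion hn hx)

lemma ten_pow_mem_A (n : ℕ) : 10 ^ n ∈ A := by
  rcases Nat.eq_zero_or_pos n with rfl | hn
  · exact mem_A_of_le_ten (by norm_num)
  · have : 10 ^ n = 10 * 10 ^ (n - 1) := by rw [← pow_succ', Nat.sub_add_cancel hn]
    have : 0 < 10 ^ (n - 1) := by positivity
    exact mem_A_of_mem_Icc hn ⟨by omega, le_rfl⟩

lemma Nat.exists_add_eq_of_mem_Icc_two_mul {lo hi M : ℕ} (hM : M ∈ Set.Icc (2 * lo) (2 * hi)) :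
    ∃ a ∈ Set.Icc lo hi, ∃ b ∈ Set.Icc lo hi, a + b = M := by
  obtain ⟨hlo, hhi⟩ := hM
  exact ⟨M / 2, ⟨by omega, by omega⟩, M - M / 2, ⟨by omega, by omega⟩, by omega⟩

lemma exists_sum_three_A_of_gap {n N : ℕ} (hn : 1 ≤ n) (hlow : 10 ^ n + 10 ≤ N)
    (hhigh : N ≤ 2 * 10 ^ n + 1) : ∃ a b c : ℕ, a ∈ A ∧ b ∈ A ∧ c ∈ A ∧ a + b + c = N := by
  have hpow : 10 ^ n = 10 * 10 ^ (n - 1) := by rw [← pow_succ', Nat.sub_add_cancel hn]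
  set c := N - 2 * 10 ^ n
  obtain ⟨a, ha, b, hb, hab⟩ := Nat.exists_add_eq_of_mem_Icc_two_mul
    (lo := 2 * 10 ^ (n - 1) + 2) (hi := 10 ^ n) (M := N - c) ⟨by omega, by omega⟩
  exact ⟨a, b, c, mem_A_of_mem_Icc hn ha, mem_A_of_mem_Icc hn hb, mem_A_of_le_ten (by omega),
    by omega⟩

theorem stmt_0 : ∀ N : ℕ, ∃ a b c : ℕ, a ∈ A ∧ b ∈ A ∧ c ∈ A ∧ a + b + c = N := by
  intro N
  have zero_mem : 0 ∈ A := mem_A_of_le_ten (Nat.zero_le _)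
  rcases le_or_gt N 10 with hN | hN
  · exact ⟨N, 0, 0, mem_A_of_le_ten hN, zero_mem, zero_mem, rfl⟩
  set n := Nat.log 10 N
  have hn : 1 ≤ n := (Nat.le_log_iff_pow_le (by norm_num) (by omega)).2 (by omega)
  have hlow : 10 ^ n ≤ N := Nat.pow_log_le_self 10 (by omega)
  have hhigh : N < 10 ^ (n + 1) := Nat.lt_pow_succ_log_self (by norm_num) N
  rcases le_or_gt N (10 ^ n + 10) with hsmall | hsmall
  · exact ⟨10 ^ n, N - 10 ^ n, 0, ten_pow_mem_A n, mem_A_of_le_ten (by omega), zero_mem,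
      by omega⟩
  rcases le_or_gt N (2 * 10 ^ n + 1) with hgap | hgap
  · exact exists_sum_three_A_of_gap hn hsmall.le hgap
  · have hN_mem : N ∈ A :=
      mem_A_of_mem_Icc (n := n + 1) (by omega) ⟨by rw [Nat.add_sub_cancel]; omega, hhigh.le⟩
    exact ⟨N, 0, 0, hN_mem, zero_mem, zero_mem, rfl⟩
end

section
/- For every n ≥ 1, the number 2·10^n + 1 cannot be written as a sum of two elements of A, where A = {0,...,10} ∪ ⋃_{n≥2} {2·10^(n-1)+2, ..., 10^n}. -/
lemma key (n x : ℕ) (hn : 1 ≤ n) (hx : x ∈ A) : x ≤ 10 ^ n ∨ 2 * 10 ^ n + 2 ≤ x := by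
  rcases hx with h | h
  · left
    calc x ≤ 10 := h
    _ = 10 ^ 1 := (pow_one 10).symm
    _ ≤ 10 ^ n := Nat.pow_le_pow_right (by norm_num) hn
  · simp only [Set.mem_iUnion, Set.mem_Icc, Set.mem_Ici] at h
    obtain ⟨m, hm2, h1, h2⟩ := h
    rcases le_or_gt m n with hmn | hmn
    · left; exact h2.trans (Nat.pow_le_pow_right (by norm_num) hmn)
    · right
      have hnm : n ≤ m - 1 := by omega
      calc 2 * 10 ^ n + 2 ≤ 2 * 10 ^ (m - 1) + 2 := by
            have := Nat.pow_le_pow_right (show 1 ≤ 10 by norm_num) hnm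
            omega
      _ ≤ x := h1

theorem stmt_1 : ∀ n : ℕ, 1 ≤ n →
    ¬ ∃ a b : ℕ, a ∈ A ∧ b ∈ A ∧ a + b = 2 * 10 ^ n + 1 := by
  rintro n hn ⟨a, b, ha, hb, hab⟩
  have h1 := key n a hn ha
  have h2 := key n b hn hb
  omega
end

section
/- The set A = {0,...,10} ∪ ⋃_{n≥2} {2·10^(n-1)+2, ..., 10^n} has additive order exactly 3: every natural number is a sum of three elements of A, but not every natural number is a sum of two elements of A. -/
lemma memA_iff {a : ℕ} :
    a ∈ A ↔ a ≤ 10 ∨ ∃ n, 2 ≤ n ∧ 2 * 10 ^ (n - 1) + 2 ≤ a ∧ a ≤ 10 ^ n := by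
  simp only [A, Set.mem_union, Set.mem_Iic, Set.mem_iUnion, Set.mem_Icc, Set.mem_Ici]
  tauto

lemma memA_small {a : ℕ} (h : a ≤ 10) : a ∈ A := memA_iff.mpr (Or.inl h)

lemma memA_big {a n : ℕ} (hn : 2 ≤ n) (h1 : 2 * 10 ^ (n - 1) + 2 ≤ a)
    (h2 : a ≤ 10 ^ n) : a ∈ A := memA_iff.mpr (Or.inr ⟨n, hn, h1, h2⟩)

lemma pow_fact {n : ℕ} (hn : 2 ≤ n) : 10 ≤ 10 ^ (n - 1) ∧ 10 ^ n = 10 * 10 ^ (n - 1) := by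
  constructor
  · calc (10:ℕ) = 10 ^ 1 := by norm_num
    _ ≤ 10 ^ (n - 1) := Nat.pow_le_pow_right (by norm_num) (by omega)
  · conv_lhs => rw [show n = (n - 1) + 1 by omega, pow_succ]
    ring

lemma exists_n_aux : ∀ k N : ℕ, 22 ≤ N → N ≤ 2 * 10 ^ k + 1 →
    ∃ n, 2 ≤ n ∧ 2 * 10 ^ (n - 1) + 2 ≤ N ∧ N ≤ 2 * 10 ^ n + 1 := by
  intro k
  induction k with
  | zero => intro N h1 h2; norm_num at h2; omega
  | succ k ih =>
    intro N h1 h2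
    by_cases h : N ≤ 2 * 10 ^ k + 1
    · exact ih N h1 h
    · rcases Nat.eq_zero_or_pos k with hk | hk
      · subst hk; norm_num at h h2; omega
      · exact ⟨k + 1, by omega, by simpa using (by omega : 2 * 10 ^ k + 2 ≤ N), h2⟩

theorem stmt_2 :
    (∀ N : ℕ, ∃ a b c : ℕ, a ∈ A ∧ b ∈ A ∧ c ∈ A ∧ a + b + c = N) ∧
    ¬ (∀ N : ℕ, ∃ a b : ℕ, a ∈ A ∧ b ∈ A ∧ a + b = N) := by
  constructor
  · intro N
    by_cases hN : N ≤ 21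
    · exact ⟨min N 10, min (N - min N 10) 10, N - min N 10 - min (N - min N 10) 10,
        memA_small (by omega), memA_small (by omega), memA_small (by omega), by omega⟩
    · have hNk : N ≤ 2 * 10 ^ N + 1 := by
        have : N < 10 ^ N := Nat.lt_pow_self (by norm_num : 1 < 10)
        omega
      obtain ⟨n, hn2, hlo, hhi⟩ := exists_n_aux N N (by omega) hNk
      obtain ⟨hx, hpw⟩ := pow_fact hn2
      by_cases h1 : N ≤ 10 ^ n
      · exact ⟨N, 0, 0, memA_big hn2 hlo h1, memA_small (by norm_num),
          memA_small (by norm_num), by omega⟩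
      · by_cases h2 : N ≤ 2 * 10 ^ n
        · by_cases h3 : 2 * 10 ^ (n - 1) + 2 ≤ N - 10 ^ n
          · exact ⟨10 ^ n, N - 10 ^ n, 0, memA_big hn2 (by omega) (by omega),
              memA_big hn2 h3 (by omega), memA_small (by norm_num), by omega⟩
          · exact ⟨N - (2 * 10 ^ (n - 1) + 2), 2 * 10 ^ (n - 1) + 2, 0,
              memA_big hn2 (by omega) (by omega),
              memA_big hn2 (by omega) (by omega), memA_small (by norm_num), by omega⟩
        · exact ⟨10 ^ n, 10 ^ n, 1, memA_big hn2 (by omega) (by omega),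
            memA_big hn2 (by omega) (by omega), memA_small (by norm_num), by omega⟩
  · intro h
    obtain ⟨a, b, ha, hb, hab⟩ := h 21
    have key : ∀ x : ℕ, x ∈ A → x ≤ 21 → x ≤ 10 := by
      intro x hx hx21
      rcases memA_iff.mp hx with h' | ⟨n, hn2, hlo, _⟩
      · exact h'
      · have := (pow_fact hn2).1; omega
    have := key a ha (by omega)
    have := key b hb (by omega)
    omega
end

section
/- For every finite set F ⊂ ℕ, there exist infinitely many natural numbers (namely all sufficiently large numbers of the form 2·10^n + 1) that are not the sum of two elements of A ∪ F, where A = {0,...,10} ∪ ⋃_{n≥2} {2·10^(n-1)+2, ..., 10^n}. -/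
theorem stmt_4 : ∀ F : Finset ℕ, ∃ n₀ : ℕ, ∀ n : ℕ, n₀ ≤ n →
    ¬ ∃ a b : ℕ, a ∈ A ∪ ↑F ∧ b ∈ A ∪ ↑F ∧ a + b = 2 * 10 ^ n + 1 := by
  intro F
  refine ⟨F.sup id + 1, fun n hn h => ?_⟩
  obtain ⟨a, b, ha, hb, hab⟩ := h
  set c := max a b with hcdef
  have hc : c ∈ A ∪ ↑F := by
    rcases max_choice a b with h | h <;> rw [hcdef, h] <;> assumption
  have hla := le_max_left a b
  have hlb := le_max_right a b
  have hcle : c ≤ a + b := max_le (Nat.le_add_right a b) (Nat.le_add_left b a)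
  have hnpow : n < 10 ^ n := Nat.lt_pow_self (by norm_num)
  have hpow1 : 10 ≤ 10 ^ n := by
    calc (10 : ℕ) = 10 ^ 1 := (pow_one 10).symm
    _ ≤ 10 ^ n := Nat.pow_le_pow_right (by norm_num) (by omega)
  have hc1 : 10 ^ n + 1 ≤ c := by omega
  have hc2 : c ≤ 2 * 10 ^ n + 1 := by omega
  rcases hc with hcA | hcF
  · rcases hcA with hcI | hcU
    · simp only [Set.mem_Iic] at hcI
      omega
    · simp only [Set.mem_iUnion, Set.mem_Ici, Set.mem_Icc] at hcU
      obtain ⟨m, hm2, h1, h2⟩ := hcU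
      have hnm : n < m := by
        by_contra hmn
        push_neg at hmn
        have : (10:ℕ) ^ m ≤ 10 ^ n := Nat.pow_le_pow_right (by norm_num) hmn
        omega
      have : (10:ℕ) ^ n ≤ 10 ^ (m - 1) := Nat.pow_le_pow_right (by norm_num) (by omega)
      omega
  · have : c ≤ F.sup id := Finset.le_sup (f := id) hcF
    omega
end

section
/- With A = {0,...,10} ∪ ⋃_{n≥2} {2·10^(n-1)+2, ..., 10^n} and counting function A(n) = |{a ∈ A : 1 ≤ a ≤ n}|, the sequence A(2·10^n + 1)/(2·10^n + 1) converges to 4/9 as n → ∞. -/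
/-- Counting function `A(m) = |{a ∈ A : 1 ≤ a ≤ m}|`. -/
noncomputable def countA (m : ℕ) : ℕ := (A ∩ Set.Icc 1 m).ncard

lemma finite_inter (m : ℕ) : (A ∩ Set.Icc 1 m).Finite :=
  (Set.finite_Icc 1 m).subset (Set.inter_subset_right)

lemma step (n : ℕ) :
    A ∩ Set.Icc 1 (2 * 10 ^ (n + 1) + 1) =
      (A ∩ Set.Icc 1 (2 * 10 ^ n + 1)) ∪ Set.Icc (2 * 10 ^ n + 2) (10 ^ (n + 1)) := by
  ext a
  simp only [Set.mem_inter_iff, Set.mem_union, Set.mem_Icc]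
  constructor
  · rintro ⟨hA, h1, h2⟩
    by_cases hle : a ≤ 2 * 10 ^ n + 1
    · exact Or.inl ⟨hA, h1, hle⟩
    · push_neg at hle
      refine Or.inr ⟨hle, ?_⟩
      rcases hA with h10 | hU
      · -- a ≤ 10 and a ≥ 2*10^n+2 forces n = 0
        simp only [Set.mem_Iic] at h10
        have : 2 * 10 ^ n + 2 ≤ 10 := le_trans hle h10
        have hn : n = 0 := by
          by_contra hn
          have h1n : 1 ≤ n := Nat.one_le_iff_ne_zero.2 hn
          have : (10:ℕ) ≤ 10 ^ n := by
            calc (10:ℕ) = 10 ^ 1 := (pow_one 10).symm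
            _ ≤ 10 ^ n := Nat.pow_le_pow_right (by norm_num) h1n
          omega
        subst hn
        simp at h10 ⊢
        omega
      · simp only [Set.mem_iUnion, Set.mem_Icc, Set.mem_Ici] at hU
        obtain ⟨k, hk2, hk1, hk3⟩ := hU
        by_contra hgt
        push_neg at hgt
        have hkn : n + 2 ≤ k := by
          by_contra hk
          push_neg at hk
          have : 10 ^ k ≤ 10 ^ (n + 1) := Nat.pow_le_pow_right (by norm_num) (by omega)
          omega
        have : 10 ^ (n + 1) ≤ 10 ^ (k - 1) := Nat.pow_le_pow_right (by norm_num) (by omega)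
        omega
  · rintro (⟨hA, h1, h2⟩ | ⟨h1, h2⟩)
    · refine ⟨hA, h1, ?_⟩
      have : (10:ℕ) ^ n ≤ 10 ^ (n + 1) := Nat.pow_le_pow_right (by norm_num) (by omega)
      omega
    · constructor
      · rcases Nat.eq_zero_or_pos n with hn | hn
        · subst hn; left; simp only [Set.mem_Iic]; simpa using h2
        · right
          simp only [Set.mem_iUnion, Set.mem_Icc, Set.mem_Ici]
          exact ⟨n + 1, by omega, by simpa using h1, h2⟩
      · have : (10:ℕ) ^ n ≤ 10 ^ (n + 1) := Nat.pow_le_pow_right (by norm_num) (by omega)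
        constructor <;> omega

lemma countA_base : countA 3 = 3 := by
  have : A ∩ Set.Icc 1 3 = Set.Icc 1 3 := by
    apply Set.inter_eq_self_of_subset_right
    intro a ha
    left
    simp only [Set.mem_Icc] at ha
    simp only [Set.mem_Iic]
    omega
  rw [countA, this, ← Finset.coe_Icc, Set.ncard_coe_finset]
  simp

lemma countA_rec (n : ℕ) :
    countA (2 * 10 ^ (n + 1) + 1) = countA (2 * 10 ^ n + 1) + (8 * 10 ^ n - 1) := by
  have h1 : (1:ℕ) ≤ 10 ^ n := Nat.one_le_pow _ _ (by norm_num)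
  have hdisj : Disjoint (A ∩ Set.Icc 1 (2 * 10 ^ n + 1)) (Set.Icc (2 * 10 ^ n + 2) (10 ^ (n + 1))) := by
    rw [Set.disjoint_iff]
    rintro a ⟨⟨_, _, h2⟩, h3, _⟩
    omega
  have h3 : (Set.Icc (2 * 10 ^ n + 2) (10 ^ (n + 1))).ncard = 8 * 10 ^ n - 1 := by
    rw [← Finset.coe_Icc, Set.ncard_coe_finset, Nat.card_Icc, pow_succ' 10 n]
    omega
  rw [countA, step n, Set.ncard_union_eq hdisj (finite_inter _) (Set.finite_Icc _ _), h3]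
  rfl

lemma countA_formula (n : ℕ) : 9 * countA (2 * 10 ^ n + 1) + 9 * n = 8 * 10 ^ n + 19 := by
  induction n with
  | zero => simp [countA_base]
  | succ n ih =>
    have h1 : (1:ℕ) ≤ 10 ^ n := Nat.one_le_pow _ _ (by norm_num)
    rw [countA_rec]
    ring_nf
    ring_nf at ih
    omega

theorem stmt_6 :
    Filter.Tendsto (fun n : ℕ => (countA (2 * 10 ^ n + 1) : ℝ) / (2 * 10 ^ n + 1))
      Filter.atTop (nhds (4 / 9)) := by
  have key : ∀ n : ℕ, (countA (2 * 10 ^ n + 1) : ℝ) / (2 * 10 ^ n + 1)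
      = (8 + 19 * (1/10 : ℝ) ^ n - 9 * (n * (1/10 : ℝ) ^ n)) / (9 * (2 + (1/10 : ℝ) ^ n)) := by
    intro n
    have hc : (9:ℝ) * (countA (2 * 10 ^ n + 1) : ℝ) + 9 * n = 8 * 10 ^ n + 19 := by
      have := countA_formula n
      have := congrArg (Nat.cast : ℕ → ℝ) this
      push_cast at this
      linarith
    have hpow : (0:ℝ) < (10:ℝ) ^ n := by positivity
    rw [div_eq_div_iff (by positivity) (by positivity)]
    have h10 : ((1:ℝ)/10) ^ n = ((10:ℝ) ^ n)⁻¹ := by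
      rw [div_pow, one_pow, one_div]
    rw [h10]
    field_simp
    nlinarith [hc, hpow, mul_pos hpow hpow]
  rw [show (4/9 : ℝ) = (8 + 19 * 0 - 9 * 0) / (9 * (2 + 0)) by norm_num]
  refine Filter.Tendsto.congr (fun n => (key n).symm) (Filter.Tendsto.div ?_ ?_ (by norm_num))
  · exact (tendsto_const_nhds.add ((tendsto_pow_atTop_nhds_zero_of_lt_one (by norm_num) (by norm_num)).const_mul 19)).sub
      ((tendsto_self_mul_const_pow_of_lt_one (by norm_num) (by norm_num)).const_mul 9)
  · exact (tendsto_const_nhds.add (tendsto_pow_atTop_nhds_zero_of_lt_one (by norm_num) (by norm_num))).const_mul 9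
end

section
/- With A = {0,...,10} ∪ ⋃_{n≥2} {2·10^(n-1)+2, ..., 10^n} and counting function A(n) = |{a ∈ A : 1 ≤ a ≤ n}|, the sequence A(10^n)/10^n converges to 8/9 as n → ∞. -/
lemma ncard_Icc_nat (a b : ℕ) : (Set.Icc a b).ncard = b + 1 - a := by
  rw [Set.ncard_eq_toFinset_card', Set.toFinset_Icc, Nat.card_Icc]

lemma A_inter_base : A ∩ Set.Icc 1 10 = Set.Icc 1 10 := by
  apply Set.inter_eq_right.mpr
  intro a ha
  exact Or.inl ha.2

lemma A_inter_step (n : ℕ) (hn : 1 ≤ n) :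
    A ∩ Set.Icc 1 (10 ^ (n + 1)) =
      (A ∩ Set.Icc 1 (10 ^ n)) ∪ Set.Icc (2 * 10 ^ n + 2) (10 ^ (n + 1)) := by
  have hpow : (10 : ℕ) ^ n ≤ 10 ^ (n + 1) := Nat.pow_le_pow_right (by norm_num) (by omega)
  have h10 : (10 : ℕ) ≤ 10 ^ n := by
    calc (10 : ℕ) = 10 ^ 1 := (pow_one 10).symm
    _ ≤ 10 ^ n := Nat.pow_le_pow_right (by norm_num) hn
  ext a
  constructor
  · rintro ⟨hA, h1, h2⟩
    by_cases hle : a ≤ 10 ^ n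
    · exact Or.inl ⟨hA, h1, hle⟩
    · push_neg at hle
      right
      refine ⟨?_, h2⟩
      rcases hA with h | h
      · simp only [Set.mem_Iic] at h; omega
      · simp only [Set.mem_iUnion, Set.mem_Icc, Set.mem_Ici] at h
        obtain ⟨k, hk2, hk1, hk3⟩ := h
        by_cases hkn : k ≤ n
        · have : (10 : ℕ) ^ k ≤ 10 ^ n := Nat.pow_le_pow_right (by norm_num) hkn
          omega
        · push_neg at hkn
          have hk1' : n ≤ k - 1 := by omega
          have : (10 : ℕ) ^ n ≤ 10 ^ (k - 1) := Nat.pow_le_pow_right (by norm_num) hk1'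
          omega
  · rintro (⟨hA, h1, h2⟩ | ⟨h1, h2⟩)
    · exact ⟨hA, h1, le_trans h2 hpow⟩
    · refine ⟨Or.inr ?_, by omega, h2⟩
      simp only [Set.mem_iUnion, Set.mem_Icc, Set.mem_Ici]
      exact ⟨n + 1, by omega, by simpa using h1, h2⟩

lemma countA_key (n : ℕ) (hn : 1 ≤ n) :
    9 * countA (10 ^ n) + 9 * n = 8 * 10 ^ n + 19 := by
  induction n, hn using Nat.le_induction with
  | base =>
    have : countA (10 ^ 1) = 10 := by
      unfold countA
      rw [pow_one, A_inter_base, ncard_Icc_nat]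
    rw [this]; norm_num
  | succ n hn ih =>
    have h10 : (10 : ℕ) ≤ 10 ^ n := by
      calc (10 : ℕ) = 10 ^ 1 := (pow_one 10).symm
      _ ≤ 10 ^ n := Nat.pow_le_pow_right (by norm_num) hn
    have hfin1 : (A ∩ Set.Icc 1 (10 ^ n)).Finite :=
      (Set.finite_Icc 1 (10 ^ n)).subset Set.inter_subset_right
    have hfin2 : (Set.Icc (2 * 10 ^ n + 2) (10 ^ (n + 1))).Finite := Set.finite_Icc _ _
    have hdisj : Disjoint (A ∩ Set.Icc 1 (10 ^ n))
        (Set.Icc (2 * 10 ^ n + 2) (10 ^ (n + 1))) := by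
      rw [Set.disjoint_left]
      rintro a ⟨_, _, h2⟩ ⟨h3, _⟩
      omega
    have hc : countA (10 ^ (n + 1)) = countA (10 ^ n) + (8 * 10 ^ n - 1) := by
      unfold countA
      rw [A_inter_step n hn, Set.ncard_union_eq hdisj hfin1 hfin2, ncard_Icc_nat]
      congr 1
      have : (10 : ℕ) ^ (n + 1) = 10 * 10 ^ n := by ring
      omega
    rw [hc]
    have : (10 : ℕ) ^ (n + 1) = 10 * 10 ^ n := by ring
    omega

theorem stmt_7 :
    Filter.Tendsto (fun n : ℕ => (countA (10 ^ n) : ℝ) / (10 ^ n))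
      Filter.atTop (nhds (8 / 9)) := by
  have h1 : Filter.Tendsto (fun n : ℕ => ((1 : ℝ) / 10) ^ n) Filter.atTop (nhds 0) :=
    tendsto_pow_atTop_nhds_zero_of_lt_one (by norm_num) (by norm_num)
  have h2 : Filter.Tendsto (fun n : ℕ => (n : ℝ) * (1 / 10) ^ n) Filter.atTop (nhds 0) :=
    tendsto_self_mul_const_pow_of_lt_one (by norm_num) (by norm_num)
  have h3 : Filter.Tendsto
      (fun n : ℕ => 8 / 9 + (19 / 9) * ((1 : ℝ) / 10) ^ n - (n : ℝ) * (1 / 10) ^ n)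
      Filter.atTop (nhds (8 / 9)) := by
    have := (Filter.Tendsto.add (tendsto_const_nhds (x := (8:ℝ)/9) (f := Filter.atTop (α := ℕ))) (h1.const_mul (19 / 9))).sub h2
    simpa using this
  apply h3.congr'
  filter_upwards [Filter.eventually_ge_atTop 1] with n hn
  have hkey : (9 : ℝ) * (countA (10 ^ n) : ℝ) + 9 * n = 8 * 10 ^ n + 19 := by
    exact_mod_cast countA_key n hn
  have hp : ((10 : ℝ) ^ n) ≠ 0 := by positivity
  have hc : (countA (10 ^ n) : ℝ) = (8 * 10 ^ n + 19 - 9 * n) / 9 := by linarith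
  rw [hc, one_div, inv_pow]
  field_simp
end

section
/- With A = {0,...,10} ∪ ⋃_{n≥2} {2·10^(n-1)+2, ..., 10^n} and A(n) = |{a ∈ A : 1 ≤ a ≤ n}|, the liminf of A(n)/n as n → ∞ is at most 4/9. -/
lemma sum_bound : ∀ n : ℕ, 2 ≤ n →
    9 * (10 + ∑ k ∈ Finset.Icc 2 n, (8 * 10 ^ (k - 1) - 1)) ≤ 4 * (2 * 10 ^ n + 1) := by
  intro n hn
  induction n, hn using Nat.le_induction with
  | base => norm_num
  | succ n hn ih =>
    rw [Finset.sum_Icc_succ_top (by omega)]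
    have h1 : 10 ^ (n + 1 - 1) = 10 ^ n := by congr 1
    have h2 : (10:ℕ) ^ (n + 1) = 10 * 10 ^ n := by ring
    have h3 : (1:ℕ) ≤ 10 ^ n := Nat.one_le_pow _ _ (by norm_num)
    rw [h1, h2]
    omega

lemma countA_bound (n : ℕ) (hn : 2 ≤ n) :
    9 * countA (2 * 10 ^ n + 1) ≤ 4 * (2 * 10 ^ n + 1) := by
  set m := 2 * 10 ^ n + 1 with hm
  set T : Finset ℕ :=
    Finset.Icc 1 10 ∪ (Finset.Icc 2 n).biUnion (fun k => Finset.Icc (2 * 10 ^ (k - 1) + 2) (10 ^ k))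
    with hT
  have hsub : A ∩ Set.Icc 1 m ⊆ ↑T := by
    rintro a ⟨ha, h1, h2⟩
    simp only [hT, Finset.coe_union, Finset.coe_biUnion, Set.mem_union, Finset.coe_Icc,
      Set.mem_iUnion, Set.mem_Icc, Finset.mem_coe, Finset.mem_Icc]
    rcases ha with h10 | hblk
    · exact Or.inl ⟨h1, h10⟩
    · simp only [Set.mem_iUnion, Set.mem_Icc, Set.mem_Ici] at hblk
      obtain ⟨k, hk2, hka, hak⟩ := hblk
      right
      refine ⟨k, ⟨hk2, ?_⟩, hka, hak⟩
      -- k ≤ n since 2 * 10^(k-1) + 2 ≤ a ≤ 2 * 10^n + 1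
      by_contra hkn
      push_neg at hkn
      have : 10 ^ n ≤ 10 ^ (k - 1) := Nat.pow_le_pow_right (by norm_num) (by omega)
      omega
  have hfin : (↑T : Set ℕ).Finite := T.finite_toSet
  have hcard : countA m ≤ T.card := by
    have := Set.ncard_le_ncard hsub hfin
    rwa [Set.ncard_coe_finset] at this
  have hTcard : T.card ≤ 10 + ∑ k ∈ Finset.Icc 2 n, (8 * 10 ^ (k - 1) - 1) := by
    refine le_trans (Finset.card_union_le _ _) ?_
    have h10 : (Finset.Icc 1 10).card = 10 := by decide
    rw [h10]
    gcongr
    refine le_trans (Finset.card_biUnion_le) ?_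
    apply Finset.sum_le_sum
    intro k hk
    rw [Nat.card_Icc]
    have hk2 : 2 ≤ k := (Finset.mem_Icc.mp hk).1
    have : (10:ℕ) ^ k = 10 * 10 ^ (k - 1) := by
      conv_lhs => rw [show k = (k - 1) + 1 by omega]
      ring
    omega
  calc 9 * countA m ≤ 9 * (10 + ∑ k ∈ Finset.Icc 2 n, (8 * 10 ^ (k - 1) - 1)) := by
        exact Nat.mul_le_mul_left _ (hcard.trans hTcard)
    _ ≤ 4 * (2 * 10 ^ n + 1) := sum_bound n hn

theorem stmt_8 :
    Filter.liminf (fun n : ℕ => (countA n : ℝ) / n) Filter.atTop ≤ 4 / 9 := by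
  apply Filter.liminf_le_of_frequently_le
  · rw [Filter.frequently_atTop]
    intro N
    set n := max 2 N with hn
    refine ⟨2 * 10 ^ n + 1, ?_, ?_⟩
    · have h1 : n < 10 ^ n := Nat.lt_pow_self (by norm_num : (1:ℕ) < 10)
      have h2 : N ≤ n := le_max_right _ _
      omega
    · have hb := countA_bound n (le_max_left _ _)
      have hpos : (0:ℝ) < (2 * 10 ^ n + 1 : ℕ) := by positivity
      rw [div_le_div_iff₀ hpos (by norm_num)]
      have : (9:ℝ) * countA (2 * 10 ^ n + 1) ≤ 4 * (2 * 10 ^ n + 1 : ℕ) := by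
        exact_mod_cast hb
      linarith
  · refine Filter.isBoundedUnder_of ⟨0, fun n => ?_⟩
    positivity
end

section
/- With A = {0,...,10} ∪ ⋃_{n≥2} {2·10^(n-1)+2, ..., 10^n} and A(n) = |{a ∈ A : 1 ≤ a ≤ n}|, the limsup of A(n)/n as n → ∞ is at least 8/9. -/
noncomputable instance : DecidablePred (· ∈ A) := Classical.decPred _

lemma mem_A_iff (x : ℕ) :
    x ∈ A ↔ x ≤ 10 ∨ ∃ n, 2 ≤ n ∧ 2 * 10 ^ (n - 1) + 2 ≤ x ∧ x ≤ 10 ^ n := by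
  simp only [A, Set.mem_union, Set.mem_Iic, Set.mem_iUnion, Set.mem_Icc, Set.mem_Ici,
    exists_prop]

lemma pow_mem_A (k : ℕ) (hk : 1 ≤ k) : 10 ^ k ∈ A := by
  rw [mem_A_iff]
  rcases Nat.lt_or_ge k 2 with h | h
  · interval_cases k <;> norm_num
  · right
    refine ⟨k, h, ?_, le_refl _⟩
    have : 10 ^ k = 10 * 10 ^ (k - 1) := by
      rw [← pow_succ']; congr 1; omega
    have h1 : 1 ≤ 10 ^ (k - 1) := Nat.one_le_pow _ _ (by norm_num)
    omega

lemma countA_eq (m : ℕ) :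
    countA m = ((Finset.Icc 1 m).filter (fun x => x ∈ A)).card := by
  rw [countA, ← Set.ncard_coe_finset]
  congr 1
  ext x
  simp only [Set.mem_inter_iff, Set.mem_Icc, Finset.coe_filter, Finset.mem_Icc,
    Set.mem_setOf_eq]
  tauto

lemma countA_le (m : ℕ) : countA m ≤ m := by
  rw [countA_eq]
  calc ((Finset.Icc 1 m).filter (fun x => x ∈ A)).card ≤ (Finset.Icc 1 m).card :=
        Finset.card_filter_le _ _
    _ = m := by rw [Nat.card_Icc]; omega

lemma gap_lemma {x k : ℕ} (hx1 : 1 ≤ x) (hxk : x ≤ 10 ^ k) (hxA : x ∉ A) :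
    ∃ n, 2 ≤ n ∧ n ≤ k ∧ 10 ^ (n - 1) ≤ x ∧ x ≤ 2 * 10 ^ (n - 1) + 1 := by
  have hxA' := hxA
  rw [mem_A_iff, not_or] at hxA'
  obtain ⟨hx10, hblocks⟩ := hxA'
  push_neg at hx10 hblocks
  set n := Nat.log 10 x + 1 with hn
  have hlog1 : 1 ≤ Nat.log 10 x := Nat.log_pos (by norm_num) (by omega)
  have h1 : 10 ^ (n - 1) ≤ x := by
    simpa [hn] using Nat.pow_log_le_self 10 (by omega : x ≠ 0)
  have h2 : x < 10 ^ n := Nat.lt_pow_succ_log_self (by norm_num) x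
  have hn2 : 2 ≤ n := by omega
  have hk1 : 1 ≤ k := by
    by_contra h
    push_neg at h
    interval_cases k
    · omega
  have hnk : n ≤ k := by
    by_contra h
    push_neg at h
    have hle : 10 ^ k ≤ 10 ^ (n - 1) := Nat.pow_le_pow_right (by norm_num) (by omega)
    have hxeq : x = 10 ^ k := by omega
    exact hxA (hxeq ▸ pow_mem_A k hk1)
  have hb := hblocks n hn2
  have hlt : x < 2 * 10 ^ (n - 1) + 2 := by
    by_contra hc
    push_neg at hc
    exact absurd (hb hc) (by omega)
  exact ⟨n, hn2, hnk, h1, by omega⟩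

/-- The "bad" elements of `[1, 10^k]` not in `A`. -/
noncomputable def badF (k : ℕ) : Finset ℕ :=
  (Finset.Icc 1 (10 ^ k)).filter (fun x => x ∉ A)

lemma badF_subset (k : ℕ) :
    badF k ⊆ (Finset.Icc 2 k).biUnion
      (fun n => Finset.Icc (10 ^ (n - 1)) (2 * 10 ^ (n - 1) + 1)) := by
  intro x hx
  simp only [badF, Finset.mem_filter, Finset.mem_Icc] at hx
  obtain ⟨⟨hx1, hxk⟩, hxA⟩ := hx
  obtain ⟨n, hn2, hnk, h1, h2⟩ := gap_lemma hx1 hxk hxA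
  simp only [Finset.mem_biUnion, Finset.mem_Icc]
  exact ⟨n, ⟨hn2, hnk⟩, h1, h2⟩

lemma sum_geom_bound (k : ℕ) :
    9 * ∑ n ∈ Finset.Icc 2 k, 10 ^ (n - 1) ≤ 10 ^ k := by
  induction k with
  | zero => simp
  | succ k ih =>
    rcases Nat.lt_or_ge (k + 1) 2 with h | h
    · have : k = 0 := by omega
      subst this
      simp
    · rw [Finset.sum_Icc_succ_top (by omega : 2 ≤ k + 1)]
      have h10 : (10:ℕ) ^ (k+1) = 10 * 10 ^ k := by ring
      have hk1 : (10:ℕ) ^ (k + 1 - 1) = 10 ^ k := by norm_num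
      omega

lemma badF_card (k : ℕ) : 9 * (badF k).card ≤ 10 ^ k + 18 * k := by
  have h1 : (badF k).card ≤ ∑ n ∈ Finset.Icc 2 k, (10 ^ (n - 1) + 2) := by
    calc (badF k).card ≤ ((Finset.Icc 2 k).biUnion
          (fun n => Finset.Icc (10 ^ (n - 1)) (2 * 10 ^ (n - 1) + 1))).card :=
          Finset.card_le_card (badF_subset k)
      _ ≤ ∑ n ∈ Finset.Icc 2 k, (Finset.Icc (10 ^ (n - 1)) (2 * 10 ^ (n - 1) + 1)).card :=
          Finset.card_biUnion_le
      _ = ∑ n ∈ Finset.Icc 2 k, (10 ^ (n - 1) + 2) := by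
          apply Finset.sum_congr rfl
          intro n _
          rw [Nat.card_Icc]
          omega
  have h2 := sum_geom_bound k
  rw [Finset.sum_add_distrib, Finset.sum_const, Nat.card_Icc, smul_eq_mul] at h1
  omega

lemma key_s9 (k : ℕ) : 8 * 10 ^ k ≤ 9 * countA (10 ^ k) + 18 * k := by
  have hsplit : countA (10 ^ k) + (badF k).card = 10 ^ k := by
    rw [countA_eq, badF]
    rw [Finset.card_filter_add_card_filter_not (fun x => x ∈ A)]
    rw [Nat.card_Icc]
    simp
  have := badF_card k
  omega

lemma tendsto_aux : Filter.Tendsto (fun k : ℕ => 18 * (k : ℝ) / 10 ^ k)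
    Filter.atTop (nhds 0) := by
  have hb : Filter.Tendsto (fun k : ℕ => 18 * ((2:ℝ)/10) ^ k) Filter.atTop (nhds 0) := by
    have := tendsto_pow_atTop_nhds_zero_of_lt_one (by norm_num : (0:ℝ) ≤ 2/10)
      (by norm_num : (2:ℝ)/10 < 1)
    simpa using this.const_mul 18
  apply squeeze_zero (fun k => by positivity) _ hb
  intro k
  have hk : (k : ℝ) ≤ 2 ^ k := by
    exact_mod_cast (Nat.lt_two_pow_self (n := k)).le
  calc 18 * (k:ℝ) / 10 ^ k ≤ 18 * 2 ^ k / 10 ^ k := by gcongr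
    _ = 18 * (2/10) ^ k := by rw [div_pow]; ring

theorem stmt_9 :
    8 / 9 ≤ Filter.limsup (fun n : ℕ => (countA n : ℝ) / n) Filter.atTop := by
  have hbdd : Filter.IsBoundedUnder (· ≤ ·) Filter.atTop
      (fun n : ℕ => (countA n : ℝ) / n) := by
    refine ⟨1, Filter.eventually_map.2 (Filter.Eventually.of_forall fun n => ?_)⟩
    rcases Nat.eq_zero_or_pos n with rfl | hn
    · simp
    · rw [div_le_one (by exact_mod_cast hn)]
      exact_mod_cast countA_le n
  apply le_of_forall_sub_le
  intro ε hε
  apply Filter.le_limsup_of_frequently_le _ hbdd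
  rw [Filter.frequently_atTop]
  intro N
  have htend := tendsto_aux
  rw [Metric.tendsto_atTop] at htend
  obtain ⟨K, hK⟩ := htend ε hε
  set k := max N K with hk
  refine ⟨10 ^ k, ?_, ?_⟩
  · calc N ≤ k := le_max_left _ _
      _ ≤ 10 ^ k := (Nat.lt_pow_self (n := k) (by norm_num)).le
  · have hsm : 18 * (k : ℝ) / 10 ^ k < ε := by
      have := hK k (le_max_right _ _)
      rw [Real.dist_eq, sub_zero, abs_of_nonneg (by positivity)] at this
      exact this
    have hkey : (8:ℝ) * 10 ^ k ≤ 9 * countA (10 ^ k) + 18 * k := by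
      exact_mod_cast key_s9 k
    have hpow : (0:ℝ) < 10 ^ k := by positivity
    have hc : ((10 ^ k : ℕ) : ℝ) = (10:ℝ) ^ k := by push_cast; ring
    rw [hc, le_div_iff₀ hpow]
    rw [div_lt_iff₀ hpow] at hsm
    nlinarith [hε.le, hpow.le]
  done
end

section
/- For any finite set F ⊂ ℕ and A = {0,...,10} ∪ ⋃_{n≥2} {2·10^(n-1)+2, ..., 10^n}, if n is large enough that max F < 10^n, then 2·10^n + 1 is not a sum of two elements of A ∪ F. -/
lemma A_gap {n x : ℕ} (hn : 1 ≤ n) (hx : x ∈ A) (h : 10 ^ n < x) :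
    2 * 10 ^ n + 2 ≤ x := by
  rcases hx with h10 | hx
  · exfalso
    have : (10:ℕ) ≤ 10 ^ n := by
      calc (10:ℕ) = 10 ^ 1 := (pow_one 10).symm
      _ ≤ 10 ^ n := Nat.pow_le_pow_right (by norm_num) hn
    simp only [Set.mem_Iic] at h10
    omega
  · simp only [Set.mem_iUnion, Set.mem_Icc, Set.mem_Ici] at hx
    obtain ⟨m, hm2, hlo, hhi⟩ := hx
    have hnm : n < m := by
      by_contra hc
      push_neg at hc
      exact absurd (le_trans hhi (Nat.pow_le_pow_right (by norm_num) hc)) (not_le.mpr h)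
    have : n ≤ m - 1 := by omega
    have : (10:ℕ) ^ n ≤ 10 ^ (m - 1) := Nat.pow_le_pow_right (by norm_num) this
    omega

theorem stmt_18 : ∀ F : Finset ℕ, ∀ n : ℕ, 1 ≤ n → (∀ x ∈ F, x < 10 ^ n) →
    ¬ ∃ a b : ℕ, a ∈ A ∪ ↑F ∧ b ∈ A ∪ ↑F ∧ a + b = 2 * 10 ^ n + 1 := by
  intro F n hn hF ⟨a, b, ha, hb, hab⟩
  have key : ∀ x ∈ A ∪ (↑F : Set ℕ), 10 ^ n < x → 2 * 10 ^ n + 2 ≤ x := by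
    rintro x (hx | hx) hgt
    · exact A_gap hn hx hgt
    · exact absurd (hF x hx) (not_lt.mpr hgt.le)
  rcases le_or_gt a (10 ^ n) with h | h
  · have hb' : 10 ^ n < b := by omega
    have := key b hb hb'
    omega
  · have := key a ha h
    omega
end
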